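/- Let M be a matroid on a finite ground set E, and let 𝓕 and 𝓕' be flags of flats of M. Let 𝓕'' be the flag of flats whose underlying set of flats is |𝓕| ∩ |𝓕'| (this intersection is a chain of flats containing ∅ and E, hence a flag). Then 𝔠_𝓕 ∩ 𝔠_{𝓕'} = 𝔠_{𝓕''} as subsets of ℝ^E. -/

import Mathlib

open scoped BigOperators

/-- The `0-1` indicator vector `e_F ∈ ℝ^E` of a subset `F ⊆ E`. -/
noncomputable def eVec {α : Type*} (F : Set α) : α → ℝ := F.indicator 1

/-- A flag of flats `∅ = F_0 ⊊ F_1 ⊊ ⋯ ⊊ F_d = E` of a matroid `M`. -/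
def IsFlag {α : Type*} (M : Matroid α) (d : ℕ) (𝓕 : Fin (d + 1) → Set α) : Prop :=
  (∀ j, M.IsFlat (𝓕 j)) ∧ StrictMono 𝓕 ∧ 𝓕 0 = ∅ ∧ 𝓕 (Fin.last d) = M.E

/-- The cone `𝔠_𝓕 = { Σ_j λ_j e_{F_j} : λ_j ≥ 0 for j = 1, …, d−1 }` of a flag. -/
def flagCone {α : Type*} (d : ℕ) (𝓕 : Fin (d + 1) → Set α) : Set (α → ℝ) :=
  { x | ∃ lam : Fin (d + 1) → ℝ,
      (∀ j : Fin (d + 1), (j : ℕ) ≠ 0 → (j : ℕ) ≠ d → 0 ≤ lam j) ∧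
      x = ∑ j, lam j • eVec (𝓕 j) }
/-!
A vector `x` lies in `𝔠_𝓕` exactly when every superlevel set `{a | t ≤ x a}` is one of the
flats of `𝓕`. Indeed, writing `i a` for the first index with `a ∈ F_{i a}`, both conditions say
that `x = w ∘ i` for some `w` antitone on the positive indices, and the coefficients `λ_j` are
then the successive differences `w j - w (j + 1)`. The superlevel condition only involves the
set `|𝓕|`, so the cone of the flag with set `|𝓕| ∩ |𝓕'|` is `𝔠_𝓕 ∩ 𝔠_{𝓕'}`.
-/

open Finset

section Telescope

variable {M : Type*} {d : ℕ}

def tailDiff [AddCommGroup M] (w : Fin (d + 1) → M) : Fin (d + 1) → M :=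
  Fin.lastCases (w (Fin.last d)) fun i => w i.castSucc - w i.succ

lemma sum_Ici_tailDiff [AddCommGroup M] (w : Fin (d + 1) → M) (k : Fin (d + 1)) :
    ∑ j ∈ Ici k, tailDiff w j = w k := by
  induction k using Fin.reverseInduction with
  | last => rw [← Fin.top_eq_last, Ici_top, sum_singleton, Fin.top_eq_last]; simp [tailDiff]
  | cast i ih =>
    have : Ioi i.castSucc = Ici i.succ := by ext; simp [Fin.castSucc_lt_iff_succ_le]
    rw [← Ioi_insert, sum_insert (by simp), this, ih]
    simp [tailDiff]

lemma tailDiff_nonneg [AddCommGroup M] [PartialOrder M] [IsOrderedAddMonoid M]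
    {w : Fin (d + 1) → M} (hw : AntitoneOn w (Set.Ioi 0)) {j : Fin (d + 1)} (hj0 : j ≠ 0)
    (hjd : j ≠ Fin.last d) : 0 ≤ tailDiff w j := by
  obtain ⟨i, rfl⟩ := Fin.exists_castSucc_eq.2 hjd
  have hi : 0 < i.castSucc := Fin.pos_iff_ne_zero.2 hj0
  simpa [tailDiff] using hw hi (hi.trans_le (Fin.castSucc_le_succ i)) (Fin.castSucc_le_succ i)

end Telescope

section Flag

variable {α : Type*} {d : ℕ} {F : Fin (d + 1) → Set α}

noncomputable def firstIndex (F : Fin (d + 1) → Set α) (a : α) : Fin (d + 1) :=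
  sInf {j | a ∈ F j}

lemma firstIndex_le_iff (hF : Monotone F) (hlast : F (Fin.last d) = Set.univ) {a : α}
    {j : Fin (d + 1)} : firstIndex F a ≤ j ↔ a ∈ F j :=
  ⟨fun h => hF h (csInf_mem (s := {j | a ∈ F j}) ⟨Fin.last d, by simp [hlast]⟩),
    fun h => csInf_le' h⟩

lemma firstIndex_ne_zero (hF : Monotone F) (h0 : F 0 = ∅) (hlast : F (Fin.last d) = Set.univ)
    (a : α) : firstIndex F a ≠ 0 := by
  intro ha
  simpa [h0] using (firstIndex_le_iff hF hlast).1 ha.le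

lemma exists_firstIndex_eq (hF : StrictMono F) (hlast : F (Fin.last d) = Set.univ)
    {k : Fin (d + 1)} (hk : k ≠ 0) : ∃ a, firstIndex F a = k := by
  obtain ⟨i, rfl⟩ := Fin.exists_succ_eq.2 hk
  obtain ⟨a, hai, hai'⟩ := Set.exists_of_ssubset (hF (Fin.castSucc_lt_succ (i := i)))
  refine ⟨a, le_antisymm ((firstIndex_le_iff hF.monotone hlast).2 hai) ?_⟩
  rw [← Fin.castSucc_lt_iff_succ_le, ← not_le, firstIndex_le_iff hF.monotone hlast]
  exact hai'

open Classical in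
lemma sum_smul_eVec_apply (F : Fin (d + 1) → Set α) (lam : Fin (d + 1) → ℝ) (a : α) :
    (∑ j, lam j • eVec (F j)) a = ∑ j with a ∈ F j, lam j := by
  rw [Finset.sum_apply, sum_filter]
  exact sum_congr rfl fun j _ => by by_cases h : a ∈ F j <;> simp [eVec, h]

lemma sum_smul_eVec_apply_eq_sum_Ici (hF : Monotone F) (hlast : F (Fin.last d) = Set.univ)
    (lam : Fin (d + 1) → ℝ) (a : α) :
    (∑ j, lam j • eVec (F j)) a = ∑ j ∈ Ici (firstIndex F a), lam j := by
  classical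
  rw [sum_smul_eVec_apply, ← filter_le_eq_Ici]
  simp only [firstIndex_le_iff hF hlast]

lemma antitone_of_mem_flagCone (hF : Monotone F) (h0 : F 0 = ∅)
    (hlast : F (Fin.last d) = Set.univ) {x : α → ℝ} (hx : x ∈ flagCone d F) {a b : α}
    (hab : firstIndex F a ≤ firstIndex F b) : x b ≤ x a := by
  obtain ⟨lam, hlam, rfl⟩ := hx
  rw [sum_smul_eVec_apply_eq_sum_Ici hF hlast, sum_smul_eVec_apply_eq_sum_Ici hF hlast]
  refine sum_le_sum_of_subset_of_nonneg (Ici_subset_Ici.2 hab) fun j hja hjb => hlam j ?_ ?_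
  · rw [mem_Ici] at hja
    exact Fin.val_ne_iff.2 (ne_bot_of_le_ne_bot (firstIndex_ne_zero hF h0 hlast a) hja)
  · rw [mem_Ici, not_le] at hjb
    exact Fin.val_ne_iff.2 (hjb.trans_le (Fin.le_last _)).ne

lemma mem_flagCone_of_antitone (hF : StrictMono F) (hlast : F (Fin.last d) = Set.univ)
    {x : α → ℝ} (hx : ∀ a b, firstIndex F a ≤ firstIndex F b → x b ≤ x a) :
    x ∈ flagCone d F := by
  set w := Function.extend (firstIndex F) x 0
  have hw (a : α) : w (firstIndex F a) = x a :=
    Function.FactorsThrough.extend_apply (fun a b h => le_antisymm (hx _ _ h.ge) (hx _ _ h.le)) 0 a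
  have hanti : AntitoneOn w (Set.Ioi 0) := by
    intro k₁ hk₁ k₂ hk₂ hk
    obtain ⟨a₁, rfl⟩ := exists_firstIndex_eq hF hlast (ne_of_gt hk₁)
    obtain ⟨a₂, rfl⟩ := exists_firstIndex_eq hF hlast (ne_of_gt hk₂)
    rw [hw, hw]
    exact hx _ _ hk
  refine ⟨tailDiff w, fun j hj0 hjd =>
    tailDiff_nonneg hanti (Fin.val_ne_iff.1 hj0) (Fin.val_ne_iff.1 hjd), funext fun a => ?_⟩
  rw [sum_smul_eVec_apply_eq_sum_Ici hF.monotone hlast, sum_Ici_tailDiff, hw]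

lemma superlevel_mem_range_iff (hF : Monotone F) (h0 : F 0 = ∅)
    (hlast : F (Fin.last d) = Set.univ) {x : α → ℝ} :
    (∀ t, {a | t ≤ x a} ∈ Set.range F) ↔
      ∀ a b, firstIndex F a ≤ firstIndex F b → x b ≤ x a := by
  constructor
  · intro hx a b hab
    obtain ⟨j, hj⟩ := hx (x b)
    have hbj : firstIndex F b ≤ j := (firstIndex_le_iff hF hlast).2 (hj ▸ le_refl (x b))
    have haj : a ∈ F j := (firstIndex_le_iff hF hlast).1 (hab.trans hbj)
    rwa [hj] at haj
  · intro hx t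
    set S := {a | t ≤ x a}
    rcases S.eq_empty_or_nonempty with hS | hS
    · exact ⟨0, h0.trans hS.symm⟩
    obtain ⟨b, hbS, hb⟩ := hS.image (firstIndex F) |>.csSup_mem (Set.toFinite _)
    refine ⟨firstIndex F b, Set.ext fun a => ?_⟩
    rw [← firstIndex_le_iff hF hlast, hb]
    exact ⟨fun ha => hbS.trans (hx _ _ (hb ▸ ha)), fun ha => le_sSup ⟨a, ha, rfl⟩⟩

lemma flagCone_eq_setOf_superlevel_mem_range (hF : StrictMono F) (h0 : F 0 = ∅)
    (hlast : F (Fin.last d) = Set.univ) :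
    flagCone d F = {x | ∀ t, {a | t ≤ x a} ∈ Set.range F} := by
  ext x
  rw [Set.mem_ofPred_eq, superlevel_mem_range_iff hF.monotone h0 hlast]
  exact ⟨fun hx _ _ => antitone_of_mem_flagCone hF.monotone h0 hlast hx,
    mem_flagCone_of_antitone hF hlast⟩

end Flag

theorem flagCone_inter_general {α : Type*} (M : Matroid α) (hE : M.E = Set.univ)
    (d d' d'' : ℕ) (𝓕 : Fin (d + 1) → Set α) (𝓕' : Fin (d' + 1) → Set α)
    (𝓕'' : Fin (d'' + 1) → Set α)
    (h𝓕 : IsFlag M d 𝓕) (h𝓕' : IsFlag M d' 𝓕') (h𝓕'' : IsFlag M d'' 𝓕'')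
    (hrange : Set.range 𝓕'' = Set.range 𝓕 ∩ Set.range 𝓕') :
    flagCone d 𝓕 ∩ flagCone d' 𝓕' = flagCone d'' 𝓕'' := by
  obtain ⟨-, hF, hF0, hFE⟩ := h𝓕
  obtain ⟨-, hF', hF'0, hF'E⟩ := h𝓕'
  obtain ⟨-, hF'', hF''0, hF''E⟩ := h𝓕''
  rw [hE] at hFE hF'E hF''E
  rw [flagCone_eq_setOf_superlevel_mem_range hF hF0 hFE,
    flagCone_eq_setOf_superlevel_mem_range hF' hF'0 hF'E,
    flagCone_eq_setOf_superlevel_mem_range hF'' hF''0 hF''E, hrange]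
  ext x
  simp only [Set.mem_inter_iff, Set.mem_ofPred_eq, forall_and]

/-- For flags of flats `𝓕, 𝓕'` of a matroid on a finite ground set, and the flag
`𝓕''` with underlying set of flats `|𝓕| ∩ |𝓕'|`, one has `𝔠_𝓕 ∩ 𝔠_{𝓕'} = 𝔠_{𝓕''}`. -/
theorem flagCone_inter {α : Type*} [Fintype α] (M : Matroid α) (hE : M.E = Set.univ)
    (d d' d'' : ℕ) (𝓕 : Fin (d + 1) → Set α) (𝓕' : Fin (d' + 1) → Set α)
    (𝓕'' : Fin (d'' + 1) → Set α)
    (h𝓕 : IsFlag M d 𝓕) (h𝓕' : IsFlag M d' 𝓕') (h𝓕'' : IsFlag M d'' 𝓕'')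
    (hrange : Set.range 𝓕'' = Set.range 𝓕 ∩ Set.range 𝓕') :
    flagCone d 𝓕 ∩ flagCone d' 𝓕' = flagCone d'' 𝓕'' :=
  flagCone_inter_general M hE d d' d'' 𝓕 𝓕' 𝓕'' h𝓕 h𝓕' h𝓕'' hrange
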